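/- Let G be a group with finite generating set S whose Cayley graph Γ has only finitely many extended cone types t₀, t₁, …, t_q, where t₀ is the type of C̄(1). For n ∈ ℕ and 0 ≤ j ≤ q let a_{n,j} be the number of g ∈ G with |g| = n whose extended cone C̄(g) has type t_j, let m_j = m(t_j) and n_{i,j} = n(t_i, t_j). Then for every n > 0 and every j ≠ 0, m_j · a_{n,j} = Σ_{i=0}^{q} n_{i,j} · a_{n−1,i}. -/

import Mathlib

variable {G : Type*} [Group G]

noncomputable def wordLength (S : Set G) (g : G) : ℕ :=
  sInf {n | ∃ w : List G, (∀ x ∈ w, x ∈ S ∪ S⁻¹) ∧ w.length = n ∧ w.prod = g}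

def cayley (S : Set G) : SimpleGraph G where
  Adj g h := g ≠ h ∧ h * g⁻¹ ∈ S ∪ S⁻¹
  symm := by
    constructor
    rintro g h ⟨hne, hmem⟩
    refine ⟨hne.symm, ?_⟩
    have key : g * h⁻¹ = (h * g⁻¹)⁻¹ := by group
    rw [key]
    rcases hmem with h1 | h1
    · exact Or.inr (by simpa [Set.mem_inv] using h1)
    · exact Or.inl (by simpa [Set.mem_inv] using h1)
  loopless := ⟨fun g h => h.1 rfl⟩

def coneSet (S : Set G) (g : G) : Set G :=
  {h | wordLength S h = wordLength S g + (cayley S).dist g h}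

lemma self_mem_coneSet (S : Set G) (g : G) : g ∈ coneSet S g := by
  simp [coneSet]

/-- The cone `C(g)` as a subgraph of the Cayley graph. -/
def coneSubgraph (S : Set G) (g : G) : (cayley S).Subgraph where
  verts := coneSet S g
  Adj a b := a ∈ coneSet S g ∧ b ∈ coneSet S g ∧ (cayley S).Adj a b
  adj_sub h := h.2.2
  edge_vert h := h.1
  symm := ⟨by rintro a b ⟨ha, hb, hab⟩; exact ⟨hb, ha, hab.symm⟩⟩

/-- The extended cone `C̄(g)` as a subgraph of the Cayley graph: the cone together with,
for each vertex `h` of the cone and each tangent edge `{h,k}` of the Cayley graph,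
the vertex `k` and the edge `{h,k}`. -/
def extConeSubgraph (S : Set G) (g : G) : (cayley S).Subgraph where
  verts := coneSet S g ∪
    {k | ∃ h ∈ coneSet S g, (cayley S).Adj h k ∧ wordLength S h = wordLength S k}
  Adj a b := (cayley S).Adj a b ∧
    ((a ∈ coneSet S g ∧ b ∈ coneSet S g) ∨
      (wordLength S a = wordLength S b ∧ (a ∈ coneSet S g ∨ b ∈ coneSet S g)))
  adj_sub h := h.1
  edge_vert := by
    rintro a b ⟨hadj, hc | ⟨ht, hc⟩⟩
    · exact Or.inl hc.1
    · rcases hc with hc | hc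
      · exact Or.inl hc
      · exact Or.inr ⟨b, hc, hadj.symm, ht.symm⟩
  symm := by
    constructor
    rintro a b ⟨hadj, hc | ⟨ht, hc⟩⟩
    · exact ⟨hadj.symm, Or.inl ⟨hc.2, hc.1⟩⟩
    · exact ⟨hadj.symm, Or.inr ⟨ht.symm, hc.symm⟩⟩

lemma self_mem_extCone (S : Set G) (g : G) : g ∈ (extConeSubgraph S g).verts :=
  Set.mem_union_left _ (self_mem_coneSet S g)

/-- Strong equivalence of extended cones: a graph isomorphism of the extended cones sending
root to root and cone onto cone. -/
noncomputable def StrongEquiv (S : Set G) (g h : G) : Prop :=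
  ∃ T : (extConeSubgraph S g).coe ≃g (extConeSubgraph S h).coe,
    ((T ⟨g, self_mem_extCone S g⟩ : (extConeSubgraph S h).verts) : G) = h ∧
    ∀ x : (extConeSubgraph S g).verts,
      ((x : G) ∈ coneSet S g ↔ ((T x : (extConeSubgraph S h).verts) : G) ∈ coneSet S h)

/-- Weak equivalence of cones: a root-preserving graph isomorphism of the cones. -/
noncomputable def WeakEquiv (S : Set G) (g h : G) : Prop :=
  ∃ T : (cayley S).induce (coneSet S g) ≃g (cayley S).induce (coneSet S h),
    ((T ⟨g, self_mem_coneSet S g⟩ : coneSet S h) : G) = h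

/-- `m(C̄(g))`: the number of norm decreasing edges at `g`. -/
noncomputable def mval (S : Set G) (g : G) : ℕ :=
  Set.ncard {h | (cayley S).Adj g h ∧ wordLength S g = wordLength S h + 1}

/-- `n(C̄(g),C̄(h))`: the number of norm increasing edges `(g,h')` at `g` with
`C̄(h')` strongly equivalent to `C̄(h)`. -/
noncomputable def nval (S : Set G) (g h : G) : ℕ :=
  Set.ncard {h' | (cayley S).Adj g h' ∧ wordLength S h' = wordLength S g + 1 ∧
    StrongEquiv S h' h}

/-!
Geodesics of the Cayley graph between two points of a cone stay in that cone, so on `C(g)` the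
word length is `|g|` plus the distance from the root measured inside `C̄(g)`. Consequently, for a
norm increasing neighbour `x` of `g`, the cone `C(x)`, the tangent edges and the extended cone
`C̄(x)` are all described intrinsically in the rooted graph `C̄(g)` with its marked vertex set
`C(g)`, and a strong equivalence `T : C̄(g) ≅ C̄(g')` restricts to strong equivalences
`C̄(x) ≅ C̄(T x)`. Hence `n(·, t_j)` depends only on the extended cone type, and so does `m`,
which is the (constant) degree of the Cayley graph minus the degree of the root in `C̄(g)`.
The recursion is the double count of the edges between the spheres of radii `n` and `n - 1`
whose outer endpoint has type `t_j`.
-/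

namespace SimpleGraph

variable {V W : Type*} {A : SimpleGraph V} {B : SimpleGraph W}

lemma Hom.dist_le (f : A →g B) {u v : V} (h : A.Reachable u v) :
    B.dist (f u) (f v) ≤ A.dist u v := by
  obtain ⟨p, hp⟩ := h.exists_walk_length_eq_dist
  simpa [hp] using B.dist_le (p.map f)

lemma Iso.dist_eq (f : A ≃g B) (u v : V) : B.dist (f u) (f v) = A.dist u v := by
  by_cases h : A.Reachable u v
  · refine le_antisymm (f.toHom.dist_le h) ?_
    simpa using f.symm.toHom.dist_le (Iso.reachable_iff.mpr h : B.Reachable (f u) (f v))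
  · rw [dist_eq_zero_of_not_reachable h,
      dist_eq_zero_of_not_reachable (mt Iso.reachable_iff.mp h)]

def Iso.restrictSubgraph {G : SimpleGraph V} {H : SimpleGraph W} {A A' : G.Subgraph}
    {B B' : H.Subgraph} (T : A.coe ≃g B.coe) (hA : A'.verts ⊆ A.verts) (hB : B'.verts ⊆ B.verts)
    (hverts : ∀ x : A.verts, (x : V) ∈ A'.verts ↔ (T x : W) ∈ B'.verts)
    (hadj : ∀ x y : A.verts, A'.Adj x y ↔ B'.Adj (T x) (T y)) : A'.coe ≃g B'.coe where
  toFun x := ⟨T ⟨x, hA x.2⟩, (hverts _).1 x.2⟩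
  invFun y := ⟨T.symm ⟨y, hB y.2⟩, (hverts _).2 (by simp)⟩
  left_inv x := by simp
  right_inv y := by simp
  map_rel_iff' := (hadj _ _).symm

end SimpleGraph

lemma Set.ncard_setOf_eq_of_equiv {α β : Type*} {s : Set α} {t : Set β} (e : s ≃ t)
    {P : α → Prop} {Q : β → Prop} (hP : ∀ a, P a → a ∈ s) (hQ : ∀ b, Q b → b ∈ t)
    (hPQ : ∀ a : s, P a ↔ Q (e a)) : {a | P a}.ncard = {b | Q b}.ncard :=
  Set.ncard_congr' <| (Equiv.subtypeSubtypeEquivSubtype (hP _)).symm.trans <|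
    (e.subtypeEquiv hPQ).trans (Equiv.subtypeSubtypeEquivSubtype (hQ _))

section WordLength

variable {S : Set G}

lemma cayley_adj_iff {g h : G} : (cayley S).Adj g h ↔ g ≠ h ∧ h * g⁻¹ ∈ S ∪ S⁻¹ := Iff.rfl

lemma cayley_adj_mul_right_iff (c : G) {g h : G} :
    (cayley S).Adj (g * c) (h * c) ↔ (cayley S).Adj g h := by
  simp [cayley_adj_iff, mul_assoc]

def cayleyMulRight (S : Set G) (c : G) : cayley S ≃g cayley S where
  toEquiv := Equiv.mulRight c
  map_rel_iff' := cayley_adj_mul_right_iff c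

lemma finite_setOf_cayley_adj (hS : S.Finite) (g : G) : {h | (cayley S).Adj g h}.Finite :=
  ((hS.union hS.inv).image (· * g)).subset fun h hadj => ⟨h * g⁻¹, hadj.2, by group⟩

lemma ncard_setOf_cayley_adj (g g' : G) :
    {h | (cayley S).Adj g h}.ncard = {h | (cayley S).Adj g' h}.ncard :=
  Set.ncard_congr' <| (Equiv.mulRight (g⁻¹ * g')).subtypeEquiv fun h => by
    simpa [mul_assoc] using (cayley_adj_mul_right_iff (S := S) (g⁻¹ * g') (g := g) (h := h)).symm

lemma cayley_reachable_one (hgen : Subgroup.closure S = ⊤) (g : G) : (cayley S).Reachable 1 g := by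
  have hg : g ∈ Subgroup.closure S := hgen ▸ Subgroup.mem_top g
  induction hg using Subgroup.closure_induction with
  | mem s hs =>
    by_cases h1 : (1 : G) = s
    · exact h1 ▸ .rfl
    · exact (show (cayley S).Adj 1 s from ⟨h1, by simpa using Or.inl hs⟩).reachable
  | one => exact .rfl
  | mul x y _ _ hx hy =>
    exact hy.trans (by simpa [cayleyMulRight] using hx.map (cayleyMulRight S y).toHom)
  | inv x _ hx =>
    have := hx.map (cayleyMulRight S x⁻¹).toHom
    simp only [cayleyMulRight] at this
    simpa using this.symm

lemma cayley_connected (hgen : Subgroup.closure S = ⊤) : (cayley S).Connected :=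
  (SimpleGraph.connected_iff_exists_forall_reachable _).2 ⟨1, cayley_reachable_one hgen⟩

lemma wordLength_prod_le_length {w : List G} (hw : ∀ x ∈ w, x ∈ S ∪ S⁻¹) :
    wordLength S w.prod ≤ w.length :=
  Nat.sInf_le ⟨w, hw, rfl, rfl⟩

lemma exists_word_length_eq_wordLength (hgen : Subgroup.closure S = ⊤) (g : G) :
    ∃ w : List G, (∀ x ∈ w, x ∈ S ∪ S⁻¹) ∧ w.length = wordLength S g ∧ w.prod = g := by
  have hg : g ∈ (Subgroup.closure S).toSubmonoid := hgen ▸ Subgroup.mem_top g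
  rw [Subgroup.closure_toSubmonoid] at hg
  obtain ⟨w, hw, hprod⟩ := Submonoid.exists_list_of_mem_closure hg
  have hne : {n | ∃ w : List G, (∀ x ∈ w, x ∈ S ∪ S⁻¹) ∧ w.length = n ∧ w.prod = g}.Nonempty :=
    ⟨w.length, w, hw, rfl, hprod⟩
  exact Nat.sInf_mem hne

lemma wordLength_le_of_adj (hgen : Subgroup.closure S = ⊤) {g h : G} (hadj : (cayley S).Adj g h) :
    wordLength S h ≤ wordLength S g + 1 := by
  obtain ⟨w, hw, hlen, rfl⟩ := exists_word_length_eq_wordLength hgen g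
  have := wordLength_prod_le_length (w := h * w.prod⁻¹ :: w)
    (List.forall_mem_cons.2 ⟨hadj.2, hw⟩)
  simp_all

lemma wordLength_le_add_length (hgen : Subgroup.closure S = ⊤) {g h : G}
    (p : (cayley S).Walk g h) : wordLength S h ≤ wordLength S g + p.length := by
  induction p with
  | nil => simp
  | cons hadj _ ih =>
    have := wordLength_le_of_adj hgen hadj
    rw [SimpleGraph.Walk.length_cons]
    omega

lemma wordLength_le_add_dist (hgen : Subgroup.closure S = ⊤) (g h : G) :
    wordLength S h ≤ wordLength S g + (cayley S).dist g h := by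
  obtain ⟨p, hp⟩ := (cayley_connected hgen).exists_walk_length_eq_dist g h
  exact hp ▸ wordLength_le_add_length hgen p

end WordLength

section Cone

variable {S : Set G}

lemma mem_coneSet_iff {g h : G} :
    h ∈ coneSet S g ↔ wordLength S h = wordLength S g + (cayley S).dist g h := Iff.rfl

lemma mem_coneSet_iff_of_adj {g h : G} (hadj : (cayley S).Adj g h) :
    h ∈ coneSet S g ↔ wordLength S h = wordLength S g + 1 := by
  rw [mem_coneSet_iff, SimpleGraph.dist_eq_one_iff_adj.2 hadj]

lemma mem_coneSet_trans (hgen : Subgroup.closure S = ⊤) {g x y : G} (hx : x ∈ coneSet S g)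
    (hy : y ∈ coneSet S x) :
    y ∈ coneSet S g ∧ (cayley S).dist g y = (cayley S).dist g x + (cayley S).dist x y := by
  have := wordLength_le_add_dist hgen g y
  have := (cayley_connected hgen).dist_triangle (u := g) (v := x) (w := y)
  rw [mem_coneSet_iff] at hx hy ⊢
  omega

lemma coneSet_subset_of_mem (hgen : Subgroup.closure S = ⊤) {g x : G} (hx : x ∈ coneSet S g) :
    coneSet S x ⊆ coneSet S g :=
  fun _ hy => (mem_coneSet_trans hgen hx hy).1

lemma extConeSubgraph_le_of_mem (hgen : Subgroup.closure S = ⊤) {g x : G}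
    (hx : x ∈ coneSet S g) : extConeSubgraph S x ≤ extConeSubgraph S g := by
  have hsub := coneSet_subset_of_mem hgen hx
  constructor
  · rintro y (hy | ⟨k, hk, hadj, hlen⟩)
    exacts [Or.inl (hsub hy), Or.inr ⟨k, hsub hk, hadj, hlen⟩]
  · rintro y z ⟨hadj, ⟨hy, hz⟩ | ⟨hlen, hyz⟩⟩
    exacts [⟨hadj, Or.inl ⟨hsub hy, hsub hz⟩⟩, ⟨hadj, Or.inr ⟨hlen, hyz.imp (@hsub _) (@hsub _)⟩⟩]

lemma support_subset_coneSet (hgen : Subgroup.closure S = ⊤) {x y : G} (hy : y ∈ coneSet S x)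
    (p : (cayley S).Walk x y) (hp : p.length = (cayley S).dist x y) :
    ∀ v ∈ p.support, v ∈ coneSet S x := by
  classical
  intro v hv
  have hlen := congrArg SimpleGraph.Walk.length (p.take_spec hv)
  rw [SimpleGraph.Walk.length_append] at hlen
  have := (cayley S).dist_le (p.takeUntil v hv)
  have := wordLength_le_add_length hgen (p.dropUntil v hv)
  have := wordLength_le_add_dist hgen x v
  rw [mem_coneSet_iff] at hy ⊢
  omega

def extConeRoot (S : Set G) (g : G) : (extConeSubgraph S g).verts := ⟨g, self_mem_extCone S g⟩

def coneSetToExtCone (S : Set G) (g : G) :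
    (cayley S).induce (coneSet S g) →g (extConeSubgraph S g).coe where
  toFun x := ⟨x, Or.inl x.2⟩
  map_rel' {x y} hadj := ⟨hadj, Or.inl ⟨x.2, y.2⟩⟩

lemma reachable_and_dist_eq_of_mem_coneSet (hgen : Subgroup.closure S = ⊤) {g : G}
    {u v : (extConeSubgraph S g).verts} (hu : (u : G) ∈ coneSet S g)
    (hv : (v : G) ∈ coneSet S u) :
    (extConeSubgraph S g).coe.Reachable u v ∧
      (extConeSubgraph S g).coe.dist u v = (cayley S).dist u v := by
  obtain ⟨p, hp⟩ := (cayley_connected hgen).exists_walk_length_eq_dist (u : G) v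
  have hsupp : ∀ w ∈ p.support, w ∈ coneSet S g := fun w hw =>
    coneSet_subset_of_mem hgen hu (support_subset_coneSet hgen hv p hp w hw)
  let q : (extConeSubgraph S g).coe.Walk u v := (p.induce _ hsupp).map (coneSetToExtCone S g)
  have hq : q.length = (cayley S).dist u v := by
    have h := congrArg SimpleGraph.Walk.length (p.map_induce hsupp)
    rw [SimpleGraph.Walk.length_map] at h
    exact hp ▸ (SimpleGraph.Walk.length_map _ _).trans h
  refine ⟨⟨q⟩, le_antisymm (hq ▸ SimpleGraph.dist_le q) ?_⟩
  exact (extConeSubgraph S g).hom.dist_le ⟨q⟩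

lemma dist_extConeRoot (hgen : Subgroup.closure S = ⊤) {g : G} {v : (extConeSubgraph S g).verts}
    (hv : (v : G) ∈ coneSet S g) :
    (extConeSubgraph S g).coe.dist (extConeRoot S g) v = (cayley S).dist g v :=
  (reachable_and_dist_eq_of_mem_coneSet hgen (u := extConeRoot S g) (self_mem_coneSet S g) hv).2

end Cone

section Intrinsic

variable {S : Set G}

def IsNormIncreasing (S : Set G) (g h : G) : Prop :=
  (cayley S).Adj g h ∧ wordLength S h = wordLength S g + 1

lemma IsNormIncreasing.mem_coneSet {g h : G} (hh : IsNormIncreasing S g h) : h ∈ coneSet S g :=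
  (mem_coneSet_iff_of_adj hh.1).2 hh.2

lemma isNormIncreasing_iff {g h : G} :
    IsNormIncreasing S g h ↔ h ∈ coneSet S g ∧ (extConeSubgraph S g).Adj g h :=
  ⟨fun hh => ⟨hh.mem_coneSet, hh.1, Or.inl ⟨self_mem_coneSet S g, hh.mem_coneSet⟩⟩,
    fun ⟨hh, hadj⟩ => ⟨hadj.1, (mem_coneSet_iff_of_adj hadj.1).1 hh⟩⟩

lemma extCone_adj_self_iff (hgen : Subgroup.closure S = ⊤) {g h : G} :
    (extConeSubgraph S g).Adj g h ↔
      (cayley S).Adj g h ∧ wordLength S g ≠ wordLength S h + 1 := by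
  constructor
  · rintro ⟨hadj, ⟨-, hh⟩ | ⟨hlen, -⟩⟩
    · exact ⟨hadj, by rw [mem_coneSet_iff_of_adj hadj] at hh; omega⟩
    · exact ⟨hadj, by omega⟩
  · rintro ⟨hadj, hne⟩
    have := wordLength_le_of_adj hgen hadj
    have := wordLength_le_of_adj hgen hadj.symm
    refine ⟨hadj, ?_⟩
    by_cases hinc : wordLength S h = wordLength S g + 1
    · exact Or.inl ⟨self_mem_coneSet S g, (mem_coneSet_iff_of_adj hadj).2 hinc⟩
    · exact Or.inr ⟨by omega, Or.inl (self_mem_coneSet S g)⟩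

/-- Every edge of `C̄(g)` has an endpoint in `C(g)`, and on `C(g)` the word length is `|g|` plus
the distance from the root. -/
lemma wordLength_eq_iff_of_extCone_adj (hgen : Subgroup.closure S = ⊤) {g : G}
    {y z : (extConeSubgraph S g).verts} (h : (extConeSubgraph S g).Adj y z) :
    wordLength S y = wordLength S z ↔ ((y : G) ∈ coneSet S g → (z : G) ∈ coneSet S g →
      (extConeSubgraph S g).coe.dist (extConeRoot S g) y =
        (extConeSubgraph S g).coe.dist (extConeRoot S g) z) := by
  by_cases hyz : (y : G) ∈ coneSet S g ∧ (z : G) ∈ coneSet S g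
  · obtain ⟨hy, hz⟩ := hyz
    rw [dist_extConeRoot hgen hy, dist_extConeRoot hgen hz]
    rw [mem_coneSet_iff] at hy hz
    exact ⟨fun _ _ _ => by omega, fun h => by have := h hy hz; omega⟩
  · have hlen : wordLength S y = wordLength S z := by
      rcases h.2 with h' | ⟨h', -⟩
      exacts [absurd h' hyz, h']
    exact iff_of_true hlen fun hy hz => absurd ⟨hy, hz⟩ hyz

lemma mem_coneSet_iff_of_isNormIncreasing (hgen : Subgroup.closure S = ⊤) {g : G}
    {x v : (extConeSubgraph S g).verts} (hx : IsNormIncreasing S g x) :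
    (v : G) ∈ coneSet S x ↔ (v : G) ∈ coneSet S g ∧ (extConeSubgraph S g).coe.Reachable x v ∧
      (extConeSubgraph S g).coe.dist x v + 1 =
        (extConeSubgraph S g).coe.dist (extConeRoot S g) v := by
  have hgx : (cayley S).dist g x = 1 := SimpleGraph.dist_eq_one_iff_adj.2 hx.1
  constructor
  · intro hv
    obtain ⟨hvC, hdist⟩ := mem_coneSet_trans hgen hx.mem_coneSet hv
    obtain ⟨hreach, hd⟩ := reachable_and_dist_eq_of_mem_coneSet hgen hx.mem_coneSet hv
    refine ⟨hvC, hreach, ?_⟩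
    rw [dist_extConeRoot hgen hvC, hd]
    omega
  · rintro ⟨hvC, hreach, hd⟩
    have : (cayley S).dist x v ≤ _ := (extConeSubgraph S g).hom.dist_le hreach
    have := wordLength_le_add_dist hgen x v
    have := hx.2
    rw [dist_extConeRoot hgen hvC] at hd
    rw [mem_coneSet_iff] at hvC ⊢
    omega

lemma mem_extCone_verts_iff_of_mem_coneSet (hgen : Subgroup.closure S = ⊤) {g x : G}
    (hx : x ∈ coneSet S g) (v : (extConeSubgraph S g).verts) :
    (v : G) ∈ (extConeSubgraph S x).verts ↔ (v : G) ∈ coneSet S x ∨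
      ∃ k : (extConeSubgraph S g).verts, (k : G) ∈ coneSet S x ∧
        (extConeSubgraph S g).Adj k v ∧ wordLength S k = wordLength S v := by
  have hsub := coneSet_subset_of_mem hgen hx
  refine or_congr_right ⟨fun ⟨k, hk, hadj, hlen⟩ => ?_, fun ⟨k, hk, hadj, hlen⟩ => ?_⟩
  · exact ⟨⟨k, Or.inl (hsub hk)⟩, hk, ⟨hadj, Or.inr ⟨hlen, Or.inl (hsub hk)⟩⟩, hlen⟩
  · exact ⟨k, hk, hadj.1, hlen⟩

lemma extCone_adj_iff_of_mem_coneSet (hgen : Subgroup.closure S = ⊤) {g x : G}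
    (hx : x ∈ coneSet S g) (y z : G) :
    (extConeSubgraph S x).Adj y z ↔ (extConeSubgraph S g).Adj y z ∧
      ((y ∈ coneSet S x ∧ z ∈ coneSet S x) ∨
        (wordLength S y = wordLength S z ∧ (y ∈ coneSet S x ∨ z ∈ coneSet S x))) :=
  ⟨fun h => ⟨(extConeSubgraph_le_of_mem hgen hx).2 h, h.2⟩, fun h => ⟨h.1.1, h.2⟩⟩

end Intrinsic

section StrongIso

variable {S : Set G} {g g' : G}

def IsStrongIso (T : (extConeSubgraph S g).coe ≃g (extConeSubgraph S g').coe) : Prop :=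
  (T (extConeRoot S g) : G) = g' ∧
    ∀ x : (extConeSubgraph S g).verts, ((x : G) ∈ coneSet S g ↔ (T x : G) ∈ coneSet S g')

lemma strongEquiv_iff :
    StrongEquiv S g g' ↔
      ∃ T : (extConeSubgraph S g).coe ≃g (extConeSubgraph S g').coe, IsStrongIso T :=
  Iff.rfl

lemma extCone_adj_map_iff (T : (extConeSubgraph S g).coe ≃g (extConeSubgraph S g').coe)
    (y z : (extConeSubgraph S g).verts) :
    (extConeSubgraph S g).Adj y z ↔ (extConeSubgraph S g').Adj (T y) (T z) :=
  T.map_adj_iff.symm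

namespace IsStrongIso

variable {T : (extConeSubgraph S g).coe ≃g (extConeSubgraph S g').coe} (hT : IsStrongIso T)
include hT

lemma map_root : T (extConeRoot S g) = extConeRoot S g' := Subtype.ext hT.1

lemma dist_root (x : (extConeSubgraph S g).verts) :
    (extConeSubgraph S g').coe.dist (extConeRoot S g') (T x) =
      (extConeSubgraph S g).coe.dist (extConeRoot S g) x := by
  rw [← hT.map_root, T.dist_eq]

lemma extCone_adj_root_iff (x : (extConeSubgraph S g).verts) :
    (extConeSubgraph S g).Adj g x ↔ (extConeSubgraph S g').Adj g' (T x) := by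
  have := extCone_adj_map_iff T (extConeRoot S g) x
  rwa [hT.map_root] at this

lemma isNormIncreasing_iff (x : (extConeSubgraph S g).verts) :
    IsNormIncreasing S g x ↔ IsNormIncreasing S g' (T x) := by
  rw [_root_.isNormIncreasing_iff, _root_.isNormIncreasing_iff, hT.2 x, hT.extCone_adj_root_iff]

lemma wordLength_eq_iff (hgen : Subgroup.closure S = ⊤) {y z : (extConeSubgraph S g).verts}
    (h : (extConeSubgraph S g).Adj y z) :
    wordLength S y = wordLength S z ↔ wordLength S (T y) = wordLength S (T z) := by
  rw [wordLength_eq_iff_of_extCone_adj hgen h,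
    wordLength_eq_iff_of_extCone_adj hgen ((extCone_adj_map_iff T y z).1 h), hT.2 y, hT.2 z,
    hT.dist_root, hT.dist_root]

lemma mem_coneSet_iff_of_isNormIncreasing (hgen : Subgroup.closure S = ⊤)
    {x : (extConeSubgraph S g).verts} (hx : IsNormIncreasing S g x)
    (v : (extConeSubgraph S g).verts) : (v : G) ∈ coneSet S x ↔ (T v : G) ∈ coneSet S (T x) := by
  rw [_root_.mem_coneSet_iff_of_isNormIncreasing hgen hx,
    _root_.mem_coneSet_iff_of_isNormIncreasing hgen ((hT.isNormIncreasing_iff x).1 hx), hT.2 v,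
    SimpleGraph.Iso.reachable_iff, T.dist_eq, hT.dist_root]

lemma mem_extCone_verts_iff_of_isNormIncreasing (hgen : Subgroup.closure S = ⊤)
    {x : (extConeSubgraph S g).verts} (hx : IsNormIncreasing S g x)
    (v : (extConeSubgraph S g).verts) :
    (v : G) ∈ (extConeSubgraph S x).verts ↔ (T v : G) ∈ (extConeSubgraph S (T x)).verts := by
  rw [mem_extCone_verts_iff_of_mem_coneSet hgen hx.mem_coneSet,
    mem_extCone_verts_iff_of_mem_coneSet hgen ((hT.isNormIncreasing_iff x).1 hx).mem_coneSet,
    hT.mem_coneSet_iff_of_isNormIncreasing hgen hx]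
  refine or_congr_right (T.toEquiv.exists_congr fun k => ?_)
  rw [hT.mem_coneSet_iff_of_isNormIncreasing hgen hx k, extCone_adj_map_iff T k v]
  exact and_congr_right fun _ => and_congr_right fun hadj =>
    hT.wordLength_eq_iff hgen ((extCone_adj_map_iff T k v).2 hadj)

lemma extCone_adj_iff_of_isNormIncreasing (hgen : Subgroup.closure S = ⊤)
    {x : (extConeSubgraph S g).verts} (hx : IsNormIncreasing S g x)
    (y z : (extConeSubgraph S g).verts) :
    (extConeSubgraph S x).Adj y z ↔ (extConeSubgraph S (T x)).Adj (T y) (T z) := by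
  rw [extCone_adj_iff_of_mem_coneSet hgen hx.mem_coneSet,
    extCone_adj_iff_of_mem_coneSet hgen ((hT.isNormIncreasing_iff x).1 hx).mem_coneSet,
    ← extCone_adj_map_iff T y z, hT.mem_coneSet_iff_of_isNormIncreasing hgen hx y,
    hT.mem_coneSet_iff_of_isNormIncreasing hgen hx z]
  exact and_congr_right fun h => by rw [hT.wordLength_eq_iff hgen h]

lemma strongEquiv_of_isNormIncreasing (hgen : Subgroup.closure S = ⊤)
    {x : (extConeSubgraph S g).verts} (hx : IsNormIncreasing S g x) : StrongEquiv S x (T x) := by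
  have hsub := (extConeSubgraph_le_of_mem hgen hx.mem_coneSet).1
  refine ⟨T.restrictSubgraph hsub
      (extConeSubgraph_le_of_mem hgen ((hT.isNormIncreasing_iff x).1 hx).mem_coneSet).1
      (hT.mem_extCone_verts_iff_of_isNormIncreasing hgen hx)
      (hT.extCone_adj_iff_of_isNormIncreasing hgen hx), rfl, fun v => ?_⟩
  exact hT.mem_coneSet_iff_of_isNormIncreasing hgen hx ⟨v, hsub v.2⟩

lemma symm : IsStrongIso T.symm := by
  refine ⟨?_, fun y => by rw [hT.2, T.apply_symm_apply]⟩
  rw [← hT.map_root, T.symm_apply_apply]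
  rfl

lemma trans {g'' : G} {T' : (extConeSubgraph S g').coe ≃g (extConeSubgraph S g'').coe}
    (hT' : IsStrongIso T') : IsStrongIso (T.trans T') :=
  ⟨by simp [hT.map_root, hT'.1], fun x => (hT.2 x).trans (hT'.2 (T x))⟩

end IsStrongIso

lemma strongEquiv_symm (h : StrongEquiv S g g') : StrongEquiv S g' g :=
  let ⟨_, hT⟩ := strongEquiv_iff.1 h; ⟨_, hT.symm⟩

lemma strongEquiv_trans {g'' : G} (h : StrongEquiv S g g') (h' : StrongEquiv S g' g'') :
    StrongEquiv S g g'' :=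
  let ⟨_, hT⟩ := strongEquiv_iff.1 h; let ⟨_, hT'⟩ := strongEquiv_iff.1 h'; ⟨_, hT.trans hT'⟩

end StrongIso

section Invariance

variable {S : Set G}

lemma mval_add_ncard_extCone_adj_self (hS : S.Finite) (hgen : Subgroup.closure S = ⊤) (g : G) :
    mval S g + {h | (extConeSubgraph S g).Adj g h}.ncard = {h | (cayley S).Adj g h}.ncard := by
  rw [← Set.ncard_inter_add_ncard_sdiff_eq_ncard {h | (cayley S).Adj g h}
    {h | wordLength S g = wordLength S h + 1} (finite_setOf_cayley_adj hS g)]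
  congr 2
  ext h
  exact extCone_adj_self_iff hgen

lemma mval_eq_of_strongEquiv (hS : S.Finite) (hgen : Subgroup.closure S = ⊤) {g g' : G}
    (h : StrongEquiv S g g') : mval S g = mval S g' := by
  obtain ⟨T, hT⟩ := strongEquiv_iff.1 h
  have hdeg : {h | (extConeSubgraph S g).Adj g h}.ncard =
      {h | (extConeSubgraph S g').Adj g' h}.ncard :=
    Set.ncard_setOf_eq_of_equiv T.toEquiv (fun _ hx => (extConeSubgraph S g).edge_vert hx.symm)
      (fun _ hx => (extConeSubgraph S g').edge_vert hx.symm) hT.extCone_adj_root_iff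
  have := mval_add_ncard_extCone_adj_self hS hgen g
  have := mval_add_ncard_extCone_adj_self hS hgen g'
  have := ncard_setOf_cayley_adj (S := S) g g'
  omega

lemma nval_eq_of_strongEquiv (hgen : Subgroup.closure S = ⊤) {g g' : G}
    (h : StrongEquiv S g g') (z : G) : nval S g z = nval S g' z := by
  obtain ⟨T, hT⟩ := strongEquiv_iff.1 h
  refine Set.ncard_setOf_eq_of_equiv T.toEquiv
    (fun _ hx => Or.inl (IsNormIncreasing.mem_coneSet ⟨hx.1, hx.2.1⟩))
    (fun _ hx => Or.inl (IsNormIncreasing.mem_coneSet ⟨hx.1, hx.2.1⟩)) fun x => ?_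
  constructor
  · rintro ⟨hadj, hlen, hz⟩
    have hx : IsNormIncreasing S g x := ⟨hadj, hlen⟩
    obtain ⟨hadj', hlen'⟩ := (hT.isNormIncreasing_iff x).1 hx
    exact ⟨hadj', hlen', strongEquiv_trans (strongEquiv_symm
      (hT.strongEquiv_of_isNormIncreasing hgen hx)) hz⟩
  · rintro ⟨hadj', hlen', hz⟩
    have hx := (hT.isNormIncreasing_iff x).2 ⟨hadj', hlen'⟩
    exact ⟨hx.1, hx.2, strongEquiv_trans (hT.strongEquiv_of_isNormIncreasing hgen hx) hz⟩

end Invariance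

section Counting

variable {S : Set G} (hS : S.Finite) (hgen : Subgroup.closure S = ⊤)
include hS hgen

lemma finite_setOf_wordLength_le (n : ℕ) : {g : G | wordLength S g ≤ n}.Finite := by
  have : Finite (S ∪ S⁻¹ : Set G) := (hS.union hS.inv).to_subtype
  refine ((List.finite_length_le (S ∪ S⁻¹ : Set G) n).image
    fun w => (w.map Subtype.val).prod).subset fun g hg => ?_
  obtain ⟨w, hw, hlen, rfl⟩ := exists_word_length_eq_wordLength hgen g
  lift w to List (S ∪ S⁻¹ : Set G) using hw
  refine ⟨w, ?_, rfl⟩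
  rw [List.length_map] at hlen
  exact hlen.le.trans hg

lemma finite_setOf_wordLength_eq (n : ℕ) : {g : G | wordLength S g = n}.Finite :=
  (finite_setOf_wordLength_le hS hgen n).subset fun _ hg => hg.le

open Finset

lemma card_filter_wordLength_eq (n : ℕ) (p : G → Prop) [DecidablePred p] :
    #{g ∈ (finite_setOf_wordLength_eq hS hgen n).toFinset | p g} =
      {g | wordLength S g = n ∧ p g}.ncard := by
  rw [← Set.ncard_coe_finset]
  congr 1
  ext g
  simp

lemma card_bipartiteAbove_eq_mval [DecidableRel (cayley S).Adj] {n : ℕ} (hn : 0 < n) {g z : G}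
    [DecidablePred (StrongEquiv S · z)]
    (hg : g ∈ {g ∈ (finite_setOf_wordLength_eq hS hgen n).toFinset | StrongEquiv S g z}) :
    #((finite_setOf_wordLength_eq hS hgen (n - 1)).toFinset.bipartiteAbove (cayley S).Adj g) =
      mval S z := by
  obtain ⟨hg, hgz⟩ := mem_filter.1 hg
  replace hg : wordLength S g = n := (finite_setOf_wordLength_eq hS hgen n).mem_toFinset.1 hg
  rw [bipartiteAbove, card_filter_wordLength_eq hS hgen, ← mval_eq_of_strongEquiv hS hgen hgz, mval]
  congr 1
  ext h
  exact ⟨fun ⟨hh, hadj⟩ => ⟨hadj, by omega⟩, fun ⟨hadj, hh⟩ => ⟨by omega, hadj⟩⟩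

lemma card_bipartiteBelow_eq_nval [DecidableRel (cayley S).Adj] {n : ℕ} (hn : 0 < n) {h z : G}
    [DecidablePred (StrongEquiv S · z)]
    (hh : h ∈ (finite_setOf_wordLength_eq hS hgen (n - 1)).toFinset) :
    #({g ∈ (finite_setOf_wordLength_eq hS hgen n).toFinset | StrongEquiv S g z}.bipartiteBelow
      (cayley S).Adj h) = nval S h z := by
  replace hh : wordLength S h = n - 1 :=
    (finite_setOf_wordLength_eq hS hgen (n - 1)).mem_toFinset.1 hh
  rw [bipartiteBelow, filter_filter, card_filter_wordLength_eq hS hgen, nval]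
  congr 1
  ext g
  exact ⟨fun ⟨hg, hz, hadj⟩ => ⟨hadj.symm, by omega, hz⟩,
    fun ⟨hadj, hg, hz⟩ => ⟨by omega, hz, hadj.symm⟩⟩

end Counting

theorem cannon_recursion_general (S : Set G) (hS : S.Finite) (hgen : Subgroup.closure S = ⊤)
    (q : ℕ) (reps : Fin (q + 1) → G)
    (hcover : ∀ g : G, ∃ j, StrongEquiv S g (reps j))
    (hdistinct : ∀ i j, StrongEquiv S (reps i) (reps j) → i = j)
    (a : ℕ → Fin (q + 1) → ℕ)
    (ha : ∀ n j, a n j = Set.ncard {g : G | wordLength S g = n ∧ StrongEquiv S g (reps j)})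
    (n : ℕ) (hn : 0 < n) (j : Fin (q + 1)) :
    mval S (reps j) * a n j = ∑ i, nval S (reps i) (reps j) * a (n - 1) i := by
  classical
  choose type htype using hcover
  set sphere := fun m => (finite_setOf_wordLength_eq hS hgen m).toFinset
  set s := (sphere n).filter (StrongEquiv S · (reps j))
  have hcard : ∀ m i, a m i = ((sphere m).filter (type · = i)).card := fun m i => by
    have type_eq_iff : ∀ g, type g = i ↔ StrongEquiv S g (reps i) := fun g =>
      ⟨fun h => h ▸ htype g,
        fun h => hdistinct _ _ (strongEquiv_trans (strongEquiv_symm (htype g)) h)⟩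
    simp only [type_eq_iff]
    rw [card_filter_wordLength_eq hS hgen, ha]
  calc mval S (reps j) * a n j
      = ∑ g ∈ s, ((sphere (n - 1)).bipartiteAbove (cayley S).Adj g).card := by
        rw [Finset.sum_congr rfl fun g hg => card_bipartiteAbove_eq_mval hS hgen hn hg,
          Finset.sum_const, smul_eq_mul, ha, ← card_filter_wordLength_eq hS hgen, mul_comm]
    _ = ∑ h ∈ sphere (n - 1), (s.bipartiteBelow (cayley S).Adj h).card :=
        Finset.sum_card_bipartiteAbove_eq_sum_card_bipartiteBelow _
    _ = ∑ i, ∑ h ∈ (sphere (n - 1)).filter (type · = i), nval S (reps i) (reps j) := by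
        rw [← Finset.sum_fiberwise _ type]
        refine Finset.sum_congr rfl fun i _ => Finset.sum_congr rfl fun h hh => ?_
        rw [card_bipartiteBelow_eq_nval hS hgen hn (Finset.mem_filter.1 hh).1,
          nval_eq_of_strongEquiv hgen (htype h), (Finset.mem_filter.1 hh).2]
    _ = ∑ i, nval S (reps i) (reps j) * a (n - 1) i := by
        simp only [Finset.sum_const, smul_eq_mul, hcard, mul_comm]

/-- Cannon's recursion: if the Cayley graph has finitely many extended cone types
`t₀,…,t_q` (with `t₀` the type of `C̄(1)`), and `a n j` counts the elements of length `n`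
of extended cone type `t_j`, then `m_j · a_{n,j} = Σᵢ n_{i,j} · a_{n-1,i}` for `n > 0`, `j ≠ 0`. -/
theorem cannon_recursion (S : Set G) (hS : S.Finite) (hgen : Subgroup.closure S = ⊤)
    (q : ℕ) (reps : Fin (q + 1) → G) (h0 : reps 0 = 1)
    (hcover : ∀ g : G, ∃ j, StrongEquiv S g (reps j))
    (hdistinct : ∀ i j, StrongEquiv S (reps i) (reps j) → i = j)
    (a : ℕ → Fin (q + 1) → ℕ)
    (ha : ∀ n j, a n j = Set.ncard {g : G | wordLength S g = n ∧ StrongEquiv S g (reps j)})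
    (n : ℕ) (hn : 0 < n) (j : Fin (q + 1)) (hj : j ≠ 0) :
    mval S (reps j) * a n j = ∑ i, nval S (reps i) (reps j) * a (n - 1) i :=
  cannon_recursion_general S hS hgen q reps hcover hdistinct a ha n hn j
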